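/- arXiv:0809.3881 — 3 statements merged into one kernel-verified Lean document; each statement's English description precedes it below -/
import Mathlib

section
/- Descent Lemma for basic evaluation: with evaluation step e on pairs (code, argument) defined by the case distinction (basic maps finish to identity, composition e(v∘u, a) = (v ∘ e_map(u,a), e_arg(u,a)) when u ≠ id and (v, a) when u = id, cylindrification acts on the right component, iteration expands e(u^§, ⟨a;n⟩) = (u^[n], a)), and complexity c(u,a) := c(u) ∈ ℕ[ω] as defined, one has: c(u) > 0 → c(e_map(u,a)) < c(u), and c(u) = 0 → e(u,a) = (u,a). -/
/-!
Only the identity code has complexity `0`. A step of `e` on any other code either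
returns `id` (complexity `0`), or replaces one immediate subcode by its own step
while keeping the `+ 1` of the outer constructor, which lowers the complexity by the
induction hypothesis, or unfolds `u^§` of complexity `ω·(c(u)+1)` into `u^[n]` of
complexity `n·(c(u)+1)`, which has lower degree in `ω`.
-/

open Polynomial

/-- The degree-first, top-down lexicographic strict order on `ℕ[ω]`. -/
def PolyLt (p q : Polynomial ℕ) : Prop :=
  ∃ d, p.coeff d < q.coeff d ∧ ∀ e, d < e → p.coeff e = q.coeff e

/-- The universal argument object `X_⊥`: an undefined element `⊥`, singletons
of natural numbers, and nested pairs. -/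
inductive Xb : Type
  | bot : Xb
  | sing : ℕ → Xb
  | pair : Xb → Xb → Xb

/-- Codes of PR maps; a basic map constant carries its objective meaning as a
function on the universal object. -/
inductive PRCode : Type
  | idc : PRCode
  | bas : (Xb → Xb) → PRCode
  | comp : PRCode → PRCode → PRCode
  | cyl : PRCode → PRCode
  | iter : PRCode → PRCode

/-- Syntactic complexity of PR map codes, with values in `ℕ[ω]`. -/
noncomputable def cC : PRCode → Polynomial ℕ
  | .idc => 0
  | .bas _ => 1
  | .comp v u => cC u + cC v + 1
  | .cyl v => cC v + 1
  | .iter u => X * (cC u + 1)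

/-- The `n`-fold code expansion `u^[0] = ⌜id⌝`, `u^[n+1] = u^[n] ∘ u`. -/
def expand (u : PRCode) : ℕ → PRCode
  | 0 => .idc
  | n + 1 => .comp (expand u n) u

/-- The basic evaluation step `e` on map-code/argument pairs. -/
def estep : PRCode → Xb → PRCode × Xb
  | .idc, a => (.idc, a)
  | .bas f, a => (.idc, f a)
  | .comp v .idc, a => (v, a)
  | .comp v u, a => (.comp v (estep u a).1, (estep u a).2)
  | .cyl .idc, a => (.idc, a)
  | .cyl v, .pair a b => (.cyl (estep v b).1, .pair a (estep v b).2)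
  | .cyl _, _ => (.idc, .bot)
  | .iter u, .pair a (.sing n) => (expand u n, a)
  | .iter _, _ => (.idc, .bot)

/-- The evaluation step as an endomap of `Codes × X_⊥`. -/
def E : PRCode × Xb → PRCode × Xb := fun p => estep p.1 p.2


lemma polyLt_of_degree_lt {p q : ℕ[X]} (h : p.degree < q.degree) : PolyLt p q := by
  have hq : q ≠ 0 := ne_zero_of_degree_gt h
  refine ⟨q.natDegree, ?_, fun e he => ?_⟩
  · rw [coeff_eq_zero_of_degree_lt (h.trans_le degree_le_natDegree)]
    exact Nat.pos_of_ne_zero (leadingCoeff_ne_zero.2 hq)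
  · rw [coeff_eq_zero_of_natDegree_lt he, coeff_eq_zero_of_degree_lt]
    exact h.trans_le (degree_le_natDegree.trans (by exact_mod_cast he.le))

lemma zero_polyLt_iff {q : ℕ[X]} : PolyLt 0 q ↔ q ≠ 0 := by
  refine ⟨fun ⟨d, hd, _⟩ hq => by simp [hq] at hd, fun hq => polyLt_of_degree_lt ?_⟩
  rwa [degree_zero, bot_lt_iff_ne_bot, Ne, degree_eq_bot]

lemma PolyLt.add_right {p q : ℕ[X]} (h : PolyLt p q) (r : ℕ[X]) : PolyLt (p + r) (q + r) := by
  obtain ⟨d, hd, heq⟩ := h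
  exact ⟨d, by simpa using hd, fun e he => by simp [heq e he]⟩

lemma polyLt_add_one (p : ℕ[X]) : PolyLt p (p + 1) :=
  ⟨0, by simp, fun e he => by simp [coeff_one, he.ne']⟩

lemma natCast_mul_polyLt_X_mul {p : ℕ[X]} (hp : p ≠ 0) (n : ℕ) : PolyLt (n * p) (X * p) := by
  refine polyLt_of_degree_lt ((degree_mul_le _ _).trans_lt ?_)
  have hn : (n : ℕ[X]).degree + p.degree ≤ p.degree := by
    simpa using add_le_add_left (degree_natCast_le (R := ℕ) n) p.degree
  exact hn.trans_lt ((commute_X p).eq ▸ degree_lt_degree_mul_X hp)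

lemma natPolynomial_add_one_ne_zero (p : ℕ[X]) : p + 1 ≠ 0 := fun h => by
  simpa using congrArg (coeff · 0) h

lemma cC_eq_zero_iff {u : PRCode} : cC u = 0 ↔ u = .idc := by
  cases u with
  | idc => simp [cC]
  | bas f => simp [cC]
  | comp v w => simp [cC, natPolynomial_add_one_ne_zero]
  | cyl v => simp [cC, natPolynomial_add_one_ne_zero]
  | iter v => simp [cC, X_ne_zero, natPolynomial_add_one_ne_zero]

lemma cC_expand (u : PRCode) (n : ℕ) : cC (expand u n) = n * (cC u + 1) := by
  induction n with
  | zero => simp [_root_.expand, cC]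
  | succ n ih => simp only [_root_.expand, cC, ih]; push_cast; ring

theorem cC_estep_lt {u : PRCode} (a : Xb) (hu : u ≠ .idc) :
    PolyLt (cC (estep u a).1) (cC u) := by
  fun_induction estep u a with
  | case1 => exact absurd rfl hu
  | case2 => exact zero_polyLt_iff.2 one_ne_zero
  | case3 v => simpa [cC] using polyLt_add_one (cC v)
  | case4 v w a hw ih => exact ((ih hw).add_right _).add_right 1
  | case5 | case7 | case9 => exact zero_polyLt_iff.2 (cC_eq_zero_iff.not.2 hu)
  | case6 v a b hv ih => exact (ih hv).add_right 1
  | case8 v a n =>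
    have hv : cC v + 1 ≠ 0 := right_ne_zero_of_mul (cC_eq_zero_iff.not.2 hu)
    simpa [cC, cC_expand] using natCast_mul_polyLt_X_mul hv n

/-- Descent Lemma for basic evaluation: the step `e` strictly decreases the
complexity `c` above complexity `0`, and is stationary at complexity `0`. -/
theorem descent_lemma (u : PRCode) (a : Xb) :
    (PolyLt 0 (cC u) → PolyLt (cC (estep u a).1) (cC u)) ∧
      (cC u = 0 → estep u a = (u, a)) := by
  refine ⟨fun hu => cC_estep_lt a (cC_eq_zero_iff.not.1 (zero_polyLt_iff.1 hu)), fun hu => ?_⟩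
  rw [cC_eq_zero_iff.1 hu]
  rfl
end

section
/- Given the Descent Lemma for the evaluation step e with complexity c into ℕ[ω], and well-foundedness of the lexicographic order on ℕ[ω], the partial evaluation ε(u,a) := second component of e^{μ{n | c(e_map^n(u,a)) = 0}}(u,a) is a total function: for all (u, a) there exists m with c applied to the first component of e^m(u,a) equal to 0. -/
open Polynomial

def Halts (p : PRCode × Xb) : Prop := ∃ m, (E^[m] p).1 = .idc

lemma estep_comp_ne {u : PRCode} (h : u ≠ .idc) (v : PRCode) (a : Xb) :
    estep (.comp v u) a = (.comp v (estep u a).1, (estep u a).2) := by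
  cases u with
  | idc => exact absurd rfl h
  | bas f => rfl
  | comp x y => rfl
  | cyl x => rfl
  | iter x => rfl

lemma estep_cyl_ne {v : PRCode} (h : v ≠ .idc) (a b : Xb) :
    estep (.cyl v) (.pair a b) = (.cyl (estep v b).1, .pair a (estep v b).2) := by
  cases v with
  | idc => exact absurd rfl h
  | bas f => rfl
  | comp x y => rfl
  | cyl x => rfl
  | iter x => rfl

lemma halts_step {p : PRCode × Xb} (h : Halts (E p)) : Halts p := by
  obtain ⟨m, hm⟩ := h
  exact ⟨m + 1, by rwa [Function.iterate_succ_apply]⟩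

lemma halts_comp : ∀ (m : ℕ) (u : PRCode) (a : Xb) (v : PRCode),
    (E^[m] (u, a)).1 = .idc → (∀ b, Halts (v, b)) → Halts (.comp v u, a) := by
  intro m
  induction m with
  | zero =>
    intro u a v h hv
    simp only [Function.iterate_zero, id] at h
    subst h
    apply halts_step
    exact hv a
  | succ m ih =>
    intro u a v h hv
    by_cases hu : u = PRCode.idc
    · subst hu
      apply halts_step
      exact hv a
    · rw [Function.iterate_succ_apply] at h
      apply halts_step
      show Halts (estep (.comp v u) a)
      rw [estep_comp_ne hu]
      have h' : (E^[m] ((E (u, a)).1, (E (u, a)).2)).1 = .idc := by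
        simpa using h
      exact ih _ _ _ h' hv

lemma halts_cyl : ∀ (m : ℕ) (v : PRCode) (a b : Xb),
    (E^[m] (v, b)).1 = .idc → Halts (.cyl v, .pair a b) := by
  intro m
  induction m with
  | zero =>
    intro v a b h
    simp only [Function.iterate_zero, id] at h
    subst h
    exact ⟨1, rfl⟩
  | succ m ih =>
    intro v a b h
    by_cases hv : v = PRCode.idc
    · subst hv; exact ⟨1, rfl⟩
    · rw [Function.iterate_succ_apply] at h
      apply halts_step
      show Halts (estep (.cyl v) (.pair a b))
      rw [estep_cyl_ne hv]
      have h' : (E^[m] ((E (v, b)).1, (E (v, b)).2)).1 = .idc := by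
        simpa using h
      exact ih _ a _ h'

lemma halts_expand {u : PRCode} (hu : ∀ b, Halts (u, b)) :
    ∀ (n : ℕ) (b : Xb), Halts (expand u n, b) := by
  intro n
  induction n with
  | zero => exact fun b => ⟨0, rfl⟩
  | succ n ih =>
    intro b
    obtain ⟨m, hm⟩ := hu b
    exact halts_comp m u b (expand u n) hm ih

lemma halts_all : ∀ (u : PRCode) (a : Xb), Halts (u, a) := by
  intro u
  induction u with
  | idc => exact fun a => ⟨0, rfl⟩
  | bas f => exact fun a => ⟨1, rfl⟩
  | comp v u ihv ihu =>
    intro a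
    obtain ⟨m, hm⟩ := ihu a
    exact halts_comp m u a v hm ihv
  | cyl v ihv =>
    intro a
    cases a with
    | pair a b =>
      obtain ⟨m, hm⟩ := ihv b
      exact halts_cyl m v a b hm
    | bot => cases v <;> exact ⟨1, rfl⟩
    | sing n => cases v <;> exact ⟨1, rfl⟩
  | iter u ihu =>
    intro a
    cases a with
    | pair a x =>
      cases x with
      | sing n =>
        apply halts_step
        exact halts_expand ihu n a
      | bot => exact ⟨1, rfl⟩
      | pair c d => exact ⟨1, rfl⟩
    | bot => exact ⟨1, rfl⟩
    | sing n => exact ⟨1, rfl⟩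


/-- Totality (on-termination) of the evaluation `ε`, defined as the complexity
controlled iteration of the step `e`: by the Descent Lemma and
well-foundedness of the lexicographic order on `ℕ[ω]`, for every
map-code/argument pair some iterate of `e` reaches complexity `0`. -/
theorem evaluation_total (u : PRCode) (a : Xb) :
    ∃ m : ℕ, cC ((E^[m] (u, a)).1) = 0 := by
  obtain ⟨m, hm⟩ := halts_all u a
  exact ⟨m, by rw [hm]; rfl⟩
end

section
/- Evaluation is objective on concrete codes: defining ε as the terminating iteration of the evaluation step (exists by the Descent Lemma and well-foundedness of ℕ[ω]), for every map f in the term model of primitive recursion (built from 0, successor, identities, projections, pairing, composition, iteration), ε(⌜f⌝, a) = f(a) for all arguments a in the domain of f. -/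
open Polynomial

/-- Terms of the PR term model: zero, successor, identity, projections,
pairing, composition and iteration. -/
inductive PRTerm : Type
  | zeroT : PRTerm
  | succT : PRTerm
  | idT : PRTerm
  | fstT : PRTerm
  | sndT : PRTerm
  | pairT : PRTerm → PRTerm → PRTerm
  | compT : PRTerm → PRTerm → PRTerm   -- compT g f = g ∘ f
  | iterT : PRTerm → PRTerm

/-- Standard denotational semantics of PR terms on the universal object. -/
def sem : PRTerm → Xb → Xb
  | .zeroT, _ => .sing 0
  | .succT, .sing n => .sing (n + 1)
  | .succT, _ => .bot
  | .idT, a => a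
  | .fstT, .pair x _ => x
  | .fstT, _ => .bot
  | .sndT, .pair _ y => y
  | .sndT, _ => .bot
  | .pairT f g, a => .pair (sem f a) (sem g a)
  | .compT g f, a => sem g (sem f a)
  | .iterT f, .pair a (.sing n) => (sem f)^[n] a
  | .iterT _, _ => .bot

/-- The diagonal `Δ` as a basic function. -/
def deltaF : Xb → Xb := fun a => .pair a a

/-- The swap `Θ` as a basic function. -/
def swapF : Xb → Xb
  | .pair x y => .pair y x
  | _ => .bot

/-- The structural code `⌜f⌝` of a PR term: pairing is coded via
`⟨f,g⟩ = (id × g) ∘ Θ ∘ (id × f) ∘ Δ`. -/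
def code : PRTerm → PRCode
  | .zeroT => .bas (fun _ => .sing 0)
  | .succT => .bas (fun a => match a with | .sing n => .sing (n + 1) | _ => .bot)
  | .idT => .idc
  | .fstT => .bas (fun a => match a with | .pair x _ => x | _ => .bot)
  | .sndT => .bas (fun a => match a with | .pair _ y => y | _ => .bot)
  | .pairT f g =>
      .comp (.cyl (code g)) (.comp (.bas swapF) (.comp (.cyl (code f)) (.bas deltaF)))
  | .compT g f => .comp (code g) (code f)
  | .iterT f => .iter (code f)

lemma E_idc_fix (a : Xb) : ∀ k : ℕ, E^[k] ((.idc : PRCode), a) = (.idc, a)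
  | 0 => rfl
  | k + 1 => by
      rw [Function.iterate_succ_apply, show E (.idc, a) = ((.idc : PRCode), a) from rfl]
      exact E_idc_fix a k

lemma E_comp_reach (v : PRCode) :
    ∀ m u a b, E^[m] (u, a) = ((.idc : PRCode), b) →
      ∃ k, E^[k] ((.comp v u : PRCode), a) = (v, b) := by
  intro m
  induction m with
  | zero =>
    intro u a b h
    simp only [Function.iterate_zero, id_eq, Prod.mk.injEq] at h
    obtain ⟨h1, h2⟩ := h
    subst h1; subst h2
    exact ⟨1, rfl⟩
  | succ m ih =>
    intro u a b h
    rw [Function.iterate_succ_apply] at h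
    match u with
    | .idc =>
      have : E^[m] ((.idc : PRCode), a) = (.idc, b) := h
      rw [E_idc_fix] at this
      have hb : b = a := (Prod.mk.injEq _ _ _ _ ▸ this).2.symm
      subst hb
      exact ⟨1, rfl⟩
    | .bas g =>
      obtain ⟨k, hk⟩ := ih (E ((.bas g : PRCode), a)).1 (E ((.bas g : PRCode), a)).2 b (by
        rw [Prod.mk.eta]; exact h)
      exact ⟨k + 1, by rw [Function.iterate_succ_apply]; exact hk⟩
    | .comp v' u' =>
      obtain ⟨k, hk⟩ := ih (E ((.comp v' u' : PRCode), a)).1 (E ((.comp v' u' : PRCode), a)).2 b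
        (by rw [Prod.mk.eta]; exact h)
      refine ⟨k + 1, ?_⟩
      rw [Function.iterate_succ_apply,
        show E ((.comp v (.comp v' u') : PRCode), a)
          = ((.comp v (E ((.comp v' u' : PRCode), a)).1 : PRCode),
             (E ((.comp v' u' : PRCode), a)).2) from rfl]
      exact hk
    | .cyl v' =>
      obtain ⟨k, hk⟩ := ih (E ((.cyl v' : PRCode), a)).1 (E ((.cyl v' : PRCode), a)).2 b
        (by rw [Prod.mk.eta]; exact h)
      refine ⟨k + 1, ?_⟩
      rw [Function.iterate_succ_apply,
        show E ((.comp v (.cyl v') : PRCode), a)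
          = ((.comp v (E ((.cyl v' : PRCode), a)).1 : PRCode),
             (E ((.cyl v' : PRCode), a)).2) from rfl]
      exact hk
    | .iter u' =>
      obtain ⟨k, hk⟩ := ih (E ((.iter u' : PRCode), a)).1 (E ((.iter u' : PRCode), a)).2 b
        (by rw [Prod.mk.eta]; exact h)
      refine ⟨k + 1, ?_⟩
      rw [Function.iterate_succ_apply,
        show E ((.comp v (.iter u') : PRCode), a)
          = ((.comp v (E ((.iter u' : PRCode), a)).1 : PRCode),
             (E ((.iter u' : PRCode), a)).2) from rfl]
      exact hk

lemma E_cyl_reach :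
    ∀ m v (a b c : Xb), E^[m] (v, b) = ((.idc : PRCode), c) →
      ∃ k, E^[k] ((.cyl v : PRCode), .pair a b) = ((.idc : PRCode), .pair a c) := by
  intro m
  induction m with
  | zero =>
    intro v a b c h
    simp only [Function.iterate_zero, id_eq, Prod.mk.injEq] at h
    obtain ⟨h1, h2⟩ := h
    subst h1; subst h2
    exact ⟨1, rfl⟩
  | succ m ih =>
    intro v a b c h
    rw [Function.iterate_succ_apply] at h
    match v with
    | .idc =>
      have : E^[m] ((.idc : PRCode), b) = (.idc, c) := h
      rw [E_idc_fix] at this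
      have hc : c = b := (Prod.mk.injEq _ _ _ _ ▸ this).2.symm
      subst hc
      exact ⟨1, rfl⟩
    | .bas g =>
      obtain ⟨k, hk⟩ := ih (E ((.bas g : PRCode), b)).1 a (E ((.bas g : PRCode), b)).2 c
        (by rw [Prod.mk.eta]; exact h)
      exact ⟨k + 1, by rw [Function.iterate_succ_apply]; exact hk⟩
    | .comp v' u' =>
      obtain ⟨k, hk⟩ := ih (E ((.comp v' u' : PRCode), b)).1 a (E ((.comp v' u' : PRCode), b)).2 c
        (by rw [Prod.mk.eta]; exact h)
      refine ⟨k + 1, ?_⟩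
      rw [Function.iterate_succ_apply,
        show E ((.cyl (.comp v' u') : PRCode), .pair a b)
          = ((.cyl (E ((.comp v' u' : PRCode), b)).1 : PRCode),
             .pair a (E ((.comp v' u' : PRCode), b)).2) from rfl]
      exact hk
    | .cyl v' =>
      obtain ⟨k, hk⟩ := ih (E ((.cyl v' : PRCode), b)).1 a (E ((.cyl v' : PRCode), b)).2 c
        (by rw [Prod.mk.eta]; exact h)
      refine ⟨k + 1, ?_⟩
      rw [Function.iterate_succ_apply,
        show E ((.cyl (.cyl v') : PRCode), .pair a b)
          = ((.cyl (E ((.cyl v' : PRCode), b)).1 : PRCode),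
             .pair a (E ((.cyl v' : PRCode), b)).2) from rfl]
      exact hk
    | .iter u' =>
      obtain ⟨k, hk⟩ := ih (E ((.iter u' : PRCode), b)).1 a (E ((.iter u' : PRCode), b)).2 c
        (by rw [Prod.mk.eta]; exact h)
      refine ⟨k + 1, ?_⟩
      rw [Function.iterate_succ_apply,
        show E ((.cyl (.iter u') : PRCode), .pair a b)
          = ((.cyl (E ((.iter u' : PRCode), b)).1 : PRCode),
             .pair a (E ((.iter u' : PRCode), b)).2) from rfl]
      exact hk

lemma E_trans {p q r : PRCode × Xb} {m k : ℕ}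
    (h1 : E^[m] p = q) (h2 : E^[k] q = r) : E^[k + m] p = r := by
  rw [Function.iterate_add_apply, h1, h2]

lemma E_expand (u : PRCode) (g : Xb → Xb)
    (hu : ∀ x, ∃ m, E^[m] (u, x) = ((.idc : PRCode), g x)) :
    ∀ n x, ∃ m, E^[m] (expand u n, x) = ((.idc : PRCode), g^[n] x) := by
  intro n
  induction n with
  | zero => intro x; exact ⟨0, rfl⟩
  | succ n ih =>
    intro x
    obtain ⟨m, hm⟩ := hu x
    obtain ⟨k, hk⟩ := E_comp_reach (expand u n) m u x (g x) hm
    obtain ⟨m', hm'⟩ := ih (g x)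
    refine ⟨m' + k, ?_⟩
    rw [Function.iterate_succ_apply]
    exact E_trans hk hm'

lemma E_main : ∀ (f : PRTerm) (a : Xb),
    ∃ m, E^[m] (code f, a) = ((.idc : PRCode), sem f a) := by
  intro f
  induction f with
  | zeroT => intro a; exact ⟨1, rfl⟩
  | succT => intro a; exact ⟨1, by cases a <;> rfl⟩
  | idT => intro a; exact ⟨0, rfl⟩
  | fstT => intro a; exact ⟨1, by cases a <;> rfl⟩
  | sndT => intro a; exact ⟨1, by cases a <;> rfl⟩
  | pairT f g ihf ihg =>
    intro a
    -- step 1: evaluate (bas deltaF)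
    have h1 : E^[1] ((.bas deltaF : PRCode), a) = ((.idc : PRCode), .pair a a) := rfl
    obtain ⟨k1, hk1⟩ := E_comp_reach (.cyl (code f)) 1 (.bas deltaF) a (.pair a a) h1
    obtain ⟨mf, hmf⟩ := ihf a
    obtain ⟨k2, hk2⟩ := E_cyl_reach mf (code f) a a (sem f a) hmf
    have h2 := E_trans hk1 hk2
    obtain ⟨k3, hk3⟩ := E_comp_reach (.bas swapF) _ _ a (.pair a (sem f a)) h2
    have h3 : E^[1] ((.bas swapF : PRCode), .pair a (sem f a))
        = ((.idc : PRCode), .pair (sem f a) a) := rfl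
    have h4 := E_trans hk3 h3
    obtain ⟨k4, hk4⟩ := E_comp_reach (.cyl (code g)) _ _ a (.pair (sem f a) a) h4
    obtain ⟨mg, hmg⟩ := ihg a
    obtain ⟨k5, hk5⟩ := E_cyl_reach mg (code g) (sem f a) a (sem g a) hmg
    exact ⟨k5 + k4, E_trans hk4 hk5⟩
  | compT g f ihg ihf =>
    intro a
    obtain ⟨mf, hmf⟩ := ihf a
    obtain ⟨k, hk⟩ := E_comp_reach (code g) mf (code f) a (sem f a) hmf
    obtain ⟨mg, hmg⟩ := ihg (sem f a)
    exact ⟨mg + k, E_trans hk hmg⟩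
  | iterT f ih =>
    intro a
    match a with
    | .bot => exact ⟨1, rfl⟩
    | .sing n => exact ⟨1, rfl⟩
    | .pair x .bot => exact ⟨1, rfl⟩
    | .pair x (.pair y z) => exact ⟨1, rfl⟩
    | .pair x (.sing n) =>
      have h1 : E^[1] ((.iter (code f) : PRCode), .pair x (.sing n))
          = (expand (code f) n, x) := rfl
      obtain ⟨m, hm⟩ := E_expand (code f) (sem f) ih n x
      exact ⟨m + 1, E_trans h1 hm⟩

/-- Evaluation is objective on concrete codes: the terminating iteration `ε`
of the evaluation step computes, on the code `⌜f⌝` of any PR term `f` and any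
argument `a` in the domain, exactly the value `f(a)`. -/
theorem evaluation_objectivity (f : PRTerm) (a : Xb) (ha : a ≠ Xb.bot) :
    ∃ m : ℕ, cC ((E^[m] (code f, a)).1) = 0 ∧ (E^[m] (code f, a)).2 = sem f a := by
  obtain ⟨m, hm⟩ := E_main f a
  exact ⟨m, by rw [hm]; exact ⟨by simp [cC], rfl⟩⟩
end
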